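/- Let K, N, L be natural numbers with N \le L, let H \in \mathbb{C}^{K \times N}, S \in \mathbb{C}^{K \times L}, and c > 0. Suppose H^H S = U \Sigma V^H, where U \in \mathbb{C}^{N \times N} and V \in \mathbb{C}^{L \times L} are unitary and \Sigma \in \mathbb{C}^{N \times L} is a rectangular diagonal matrix with nonnegative real diagonal entries. Set X_0 = \sqrt{c} \, U I_{N \times L} V^H, where I_{N \times L} is the rectangular identity matrix (ones on the main diagonal, zeros elsewhere). Then X_0 X_0^H = c I_N, and for every X \in \mathbb{C}^{N \times L} with X X^H = c I_N one has \|H X - S\|_F^2 \ge \|H X_0 - S\|_F^2; i.e., X_0 is a global minimizer of \|H X - S\|_F^2 over the set {X : X X^H = c I_N}. -/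

import Mathlib

open Matrix Finset

/-- Squared Frobenius norm of a complex matrix. -/
noncomputable def frobSq {m n : Type*} [Fintype m] [Fintype n]
    (A : Matrix m n ℂ) : ℝ :=
  ∑ i, ∑ j, ‖A i j‖ ^ 2

/-!
On the constraint set `X Xᴴ = c I` the term `‖H X‖_F² = c ‖H‖_F²` is constant, so minimizing
`‖H X - S‖_F²` amounts to maximizing `Re tr (H X Sᴴ) = Re tr (W Σᴴ)` with `W = Uᴴ X V`, and `W`
again satisfies `W Wᴴ = c I`. Each row of such a `W` has squared length `c`, so every entry has
modulus at most `√c` and `Re tr (W Σᴴ) ≤ √c ∑ |Σᵢⱼ|`. Since `Σ` is rectangular diagonal with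
nonnegative entries, `W = √c I_{N×L}`, i.e. `X = X₀`, attains this bound.
-/

namespace Matrix

variable {l m n p : Type*}

lemma trace_mul_conjTranspose_eq_sum [Fintype m] [Fintype n] (A B : Matrix m n ℂ) :
    trace (A * Bᴴ) = ∑ i, ∑ j, A i j * star (B i j) := by
  simp [trace, mul_apply]

lemma mul_mul_conjTranspose_eq_smul_one [Fintype m] [Fintype n] [Fintype p] [DecidableEq l]
    [DecidableEq m] [DecidableEq n] {A : Matrix l m ℂ} {W : Matrix m n ℂ} {B : Matrix n p ℂ}
    {c : ℂ} (hA : A * Aᴴ = 1) (hW : W * Wᴴ = c • 1) (hB : B * Bᴴ = 1) :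
    A * W * B * (A * W * B)ᴴ = c • 1 := by
  simp only [conjTranspose_mul, Matrix.mul_assoc, ← Matrix.mul_assoc B, hB, Matrix.one_mul,
    ← Matrix.mul_assoc W, hW, smul_mul, Matrix.mul_smul, hA]

lemma sqrt_smul_mul_conjTranspose_self [Fintype n] [DecidableEq m] {E : Matrix m n ℂ}
    (hE : E * Eᴴ = 1) {c : ℝ} (hc : 0 ≤ c) :
    (√c : ℂ) • E * ((√c : ℂ) • E)ᴴ = (c : ℂ) • 1 := by
  rw [conjTranspose_smul, smul_mul, Matrix.mul_smul, hE, smul_smul, Complex.star_def,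
    Complex.conj_ofReal, ← Complex.ofReal_mul, Real.mul_self_sqrt hc]

lemma norm_apply_le_sqrt_of_mul_conjTranspose_eq_smul_one [Fintype n] [DecidableEq m]
    {W : Matrix m n ℂ} {c : ℝ} (hW : W * Wᴴ = (c : ℂ) • 1) (i : m) (j : n) :
    ‖W i j‖ ≤ √c := by
  have hrow : ∑ k, ‖W i k‖ ^ 2 = c := by
    simpa [mul_apply, Complex.mul_conj', ← Complex.ofReal_pow] using
      congrArg Complex.re (congrFun (congrFun hW i) i)
  exact Real.le_sqrt_of_sq_le (hrow ▸ single_le_sum (fun k _ => sq_nonneg ‖W i k‖) (mem_univ j))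

lemma re_trace_mul_conjTranspose_le [Fintype m] [Fintype n] {W D : Matrix m n ℂ} {r : ℝ}
    (hW : ∀ i j, ‖W i j‖ ≤ r) :
    (trace (W * Dᴴ)).re ≤ r * ∑ i, ∑ j, ‖D i j‖ := by
  rw [trace_mul_conjTranspose_eq_sum, Complex.re_sum, mul_sum]
  refine sum_le_sum fun i _ => ?_
  rw [Complex.re_sum, mul_sum]
  refine sum_le_sum fun j _ => (Complex.re_le_norm _).trans ?_
  rw [norm_mul, norm_star]
  exact mul_le_mul_of_nonneg_right (hW i j) (norm_nonneg (D i j))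

lemma trace_mul_conjTranspose_eq_sum_norm [Fintype m] [Fintype n] {E D : Matrix m n ℂ}
    (h : ∀ i j, E i j * star (D i j) = ‖D i j‖) :
    trace (E * Dᴴ) = ∑ i, ∑ j, (‖D i j‖ : ℂ) := by
  simp only [trace_mul_conjTranspose_eq_sum, h]

lemma trace_mul_mul_conjTranspose_of_conjTranspose_mul_eq [Fintype l] [Fintype m] [Fintype n]
    [Fintype p] {H : Matrix l m ℂ} {S : Matrix l n ℂ} {U : Matrix m m ℂ} {D : Matrix m p ℂ}
    {V : Matrix n p ℂ} (hSVD : Hᴴ * S = U * D * Vᴴ) (X : Matrix m n ℂ) :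
    trace (H * X * Sᴴ) = trace (Uᴴ * X * V * Dᴴ) := by
  have hSH : Sᴴ * H = V * Dᴴ * Uᴴ := by
    rw [← conjTranspose_conjTranspose H, ← conjTranspose_mul, hSVD]
    simp [conjTranspose_mul, Matrix.mul_assoc]
  rw [trace_mul_cycle, hSH, Matrix.mul_assoc (V * Dᴴ), trace_mul_comm]
  simp only [Matrix.mul_assoc]

lemma of_ite_val_eq_mul_conjTranspose_self {N L : ℕ} (h : N ≤ L) :
    let E : Matrix (Fin N) (Fin L) ℂ := of fun i j => if (i : ℕ) = (j : ℕ) then 1 else 0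
    E * Eᴴ = 1 := by
  ext i k
  simp only [mul_apply, conjTranspose_apply, of_apply, one_apply]
  rw [sum_eq_single (Fin.castLE h i)
    (fun j _ hj => by simp [show (i : ℕ) ≠ j from fun e => hj (Fin.ext e.symm)]) (by simp)]
  simp [Fin.ext_iff, eq_comm]

end Matrix

lemma ite_mul_star_eq_norm {p : Prop} [Decidable p] {z : ℂ} (hoff : ¬p → z = 0)
    (hdiag : p → ∃ r : ℝ, 0 ≤ r ∧ z = r) :
    (if p then 1 else 0) * star z = ‖z‖ := by
  by_cases hp : p
  · obtain ⟨r, hr, rfl⟩ := hdiag hp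
    simp [hp, abs_of_nonneg hr]
  · simp [hp, hoff hp]

lemma frobSq_eq_re_trace {m n : Type*} [Fintype m] [Fintype n] (A : Matrix m n ℂ) :
    frobSq A = (trace (A * Aᴴ)).re := by
  simp [frobSq, trace_mul_conjTranspose_eq_sum, Complex.mul_conj', ← Complex.ofReal_pow]

lemma frobSq_sub {m n : Type*} [Fintype m] [Fintype n] (A B : Matrix m n ℂ) :
    frobSq (A - B) = frobSq A + frobSq B - 2 * (trace (A * Bᴴ)).re := by
  have hsq (z w : ℂ) : ‖z - w‖ ^ 2 = ‖z‖ ^ 2 + ‖w‖ ^ 2 - 2 * (z * star w).re := by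
    simp only [Complex.sq_norm, Complex.normSq_apply, Complex.mul_re, Complex.sub_re,
      Complex.sub_im, Complex.star_def, Complex.conj_re, Complex.conj_im]
    ring
  simp only [frobSq, trace_mul_conjTranspose_eq_sum, Complex.re_sum, Matrix.sub_apply, hsq,
    sum_sub_distrib, sum_add_distrib, mul_sum]

lemma frobSq_mul_of_mul_conjTranspose_eq_smul_one {l m n : Type*} [Fintype l] [Fintype m]
    [Fintype n] [DecidableEq m] (H : Matrix l m ℂ) {X : Matrix m n ℂ} {c : ℝ}
    (hX : X * Xᴴ = (c : ℂ) • 1) :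
    frobSq (H * X) = c * frobSq H := by
  rw [frobSq_eq_re_trace, frobSq_eq_re_trace, conjTranspose_mul, Matrix.mul_assoc,
    ← Matrix.mul_assoc X, hX, smul_mul, Matrix.one_mul, Matrix.mul_smul, trace_smul,
    smul_eq_mul, Complex.re_ofReal_mul]

/-- **Statement 9.** Let `N ≤ L`, `H ∈ ℂ^{K×N}`, `S ∈ ℂ^{K×L}`, `c > 0`, and suppose
`Hᴴ S = U Sig Vᴴ` is an SVD (with `U`, `V` unitary and `Sig` rectangular diagonal with
nonnegative real diagonal entries).  Then `X₀ = √c • U I_{N×L} Vᴴ` satisfies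
`X₀ X₀ᴴ = c I_N` and globally minimizes `‖H X - S‖_F²` over `{X : X Xᴴ = c I_N}`. -/
theorem procrustes_svd_solution
    (K N L : ℕ) (hNL : N ≤ L)
    (H : Matrix (Fin K) (Fin N) ℂ) (S : Matrix (Fin K) (Fin L) ℂ)
    (c : ℝ) (hc : 0 < c)
    (U : Matrix (Fin N) (Fin N) ℂ) (V : Matrix (Fin L) (Fin L) ℂ)
    (hU1 : Uᴴ * U = 1) (hU2 : U * Uᴴ = 1)
    (hV1 : Vᴴ * V = 1) (hV2 : V * Vᴴ = 1)
    (Sig : Matrix (Fin N) (Fin L) ℂ)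
    (hSigoff : ∀ (i : Fin N) (j : Fin L), (i : ℕ) ≠ (j : ℕ) → Sig i j = 0)
    (hSigdiag : ∀ (i : Fin N) (j : Fin L), (i : ℕ) = (j : ℕ) →
      ∃ r : ℝ, 0 ≤ r ∧ Sig i j = (r : ℂ))
    (hSVD : Hᴴ * S = U * Sig * Vᴴ)
    (E : Matrix (Fin N) (Fin L) ℂ)
    (hE : E = Matrix.of fun (i : Fin N) (j : Fin L) =>
      if (i : ℕ) = (j : ℕ) then (1 : ℂ) else 0)
    (X0 : Matrix (Fin N) (Fin L) ℂ)
    (hX0 : X0 = (Real.sqrt c : ℂ) • (U * E * Vᴴ)) :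
    X0 * X0ᴴ = (c : ℂ) • (1 : Matrix (Fin N) (Fin N) ℂ) ∧
    ∀ X : Matrix (Fin N) (Fin L) ℂ,
      X * Xᴴ = (c : ℂ) • (1 : Matrix (Fin N) (Fin N) ℂ) →
      frobSq (H * X0 - S) ≤ frobSq (H * X - S) := by
  have hU1' : Uᴴ * Uᴴᴴ = 1 := by rwa [conjTranspose_conjTranspose]
  have hV1' : Vᴴ * Vᴴᴴ = 1 := by rwa [conjTranspose_conjTranspose]
  have hX0' : X0 = U * ((√c : ℂ) • E) * Vᴴ := by rw [hX0, Matrix.mul_smul, smul_mul]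
  have hX0c : X0 * X0ᴴ = (c : ℂ) • 1 := hX0' ▸ mul_mul_conjTranspose_eq_smul_one hU2
    (sqrt_smul_mul_conjTranspose_self (hE ▸ of_ite_val_eq_mul_conjTranspose_self hNL) hc.le) hV1'
  have hobj (X : Matrix (Fin N) (Fin L) ℂ) (hX : X * Xᴴ = (c : ℂ) • 1) :
      frobSq (H * X - S) = c * frobSq H + frobSq S - 2 * (trace (Uᴴ * X * V * Sigᴴ)).re := by
    rw [frobSq_sub, frobSq_mul_of_mul_conjTranspose_eq_smul_one H hX,
      trace_mul_mul_conjTranspose_of_conjTranspose_mul_eq hSVD]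
  have hX0val : (trace (Uᴴ * X0 * V * Sigᴴ)).re = √c * ∑ i, ∑ j, ‖Sig i j‖ := by
    have hUX0V : Uᴴ * X0 * V = (√c : ℂ) • E := by
      simp only [hX0', ← Matrix.mul_assoc, hU1, Matrix.one_mul]
      rw [Matrix.mul_assoc, hV1, Matrix.mul_one]
    rw [hUX0V, smul_mul, trace_smul, trace_mul_conjTranspose_eq_sum_norm fun i j =>
      hE ▸ ite_mul_star_eq_norm (hSigoff i j) (hSigdiag i j)]
    simp [Complex.re_sum]
  refine ⟨hX0c, fun X hX => ?_⟩
  have hle := re_trace_mul_conjTranspose_le (D := Sig)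
    (norm_apply_le_sqrt_of_mul_conjTranspose_eq_smul_one
      (mul_mul_conjTranspose_eq_smul_one hU1' hX hV2))
  rw [hobj X0 hX0c, hobj X hX, hX0val]
  linarith
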